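/- arXiv:math/9704225 — 8 statements merged into one kernel-verified Lean document; each statement's English description precedes it below -/
import Mathlib

section
/- Let L be a finite bounded lattice, x an element of L with 0 < x < 1, and y an atom of L such that y is not below x and y is not a complement of x. Then the complements of x in the lattice L' = L \ {y} are exactly the complements of x in L. -/
open scoped Classical

/-- In the lattice L' = L \ {y} obtained by deleting the atom y, the meet is
x ⊓' z = ⊥ if x ⊓ z = y and x ⊓ z otherwise; joins are unchanged.  The complements
of x in L' are exactly the complements of x in L. -/
theorem stmt_0 {L : Type*} [Lattice L] [Fintype L] [BoundedOrder L]
    (x y : L) (hx : ⊥ < x) (hx' : x < ⊤) (hy : IsAtom y)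
    (hyx : ¬ y ≤ x) (hyc : ¬ (x ⊓ y = ⊥ ∧ x ⊔ y = ⊤)) :
    {z : L | z ≠ y ∧ (if x ⊓ z = y then (⊥ : L) else x ⊓ z) = ⊥ ∧ x ⊔ z = ⊤}
      = {z : L | x ⊓ z = ⊥ ∧ x ⊔ z = ⊤} := by
  ext z
  simp only [Set.mem_setOf_eq]
  constructor
  · rintro ⟨hzy, hmeet, hjoin⟩
    have hne : x ⊓ z ≠ y := fun h => hyx (h ▸ inf_le_left)
    rw [if_neg hne] at hmeet
    exact ⟨hmeet, hjoin⟩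
  · rintro ⟨hmeet, hjoin⟩
    have hzy : z ≠ y := fun h => hyc ⟨h ▸ hmeet, h ▸ hjoin⟩
    have hne : x ⊓ z ≠ y := fun h => hy.1 (h.symm.trans hmeet)
    exact ⟨hzy, by rw [if_neg hne]; exact hmeet, hjoin⟩
end

section
/- Let L be a finite bounded lattice, x with 0 < x < 1, y an atom with y ≰ x and y not a complement of x, and z = x ∨ y. If t ≥ y, t ∧ z = y, and t ∨ z = 1, then t is a complement of x in L, i.e. t ∧ x = 0 and t ∨ x = 1. -/
open scoped Classical

theorem stmt_3 {L : Type*} [Lattice L] [Fintype L] [BoundedOrder L]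
    (x y : L) (hx : ⊥ < x) (hx' : x < ⊤) (hy : IsAtom y)
    (hyx : ¬ y ≤ x) (hyc : ¬ (x ⊓ y = ⊥ ∧ x ⊔ y = ⊤))
    (t : L) (ht : y ≤ t) (h1 : t ⊓ (x ⊔ y) = y) (h2 : t ⊔ (x ⊔ y) = ⊤) :
    t ⊓ x = ⊥ ∧ t ⊔ x = ⊤ := by
  constructor
  · have hle : t ⊓ x ≤ y := by
      rw [← h1]; exact inf_le_inf_left t le_sup_left
    rcases hy.le_iff.mp hle with h | h
    · exact h
    · exact absurd (h ▸ inf_le_right : y ≤ x) hyx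
  · have : t ⊔ (x ⊔ y) = t ⊔ x := by
      rw [sup_comm x y, ← sup_assoc, sup_eq_left.mpr ht]
    rwa [this] at h2
end

section
/- Let L be a finite bounded lattice with more than two elements, and x with 0 < x < 1 such that x is comparable to every atom and every coatom of L. Let y be an atom of L with y ≠ x. Then in the lattice L \ {y}, the element x is below every coatom of L \ {y}, and hence x has no complement in L \ {y}. -/
open scoped Classical

/-- `b` is a coatom of `α \ {y}`, stated inside `α`. -/
def IsCoatomOfErase {α : Type*} [PartialOrder α] [OrderTop α] (y b : α) : Prop :=
  b ≠ y ∧ b ≠ ⊤ ∧ ∀ c, c ≠ y → b < c → c = ⊤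

section

variable {α : Type*} [PartialOrder α]

theorem IsCoatomOfErase.isCoatom [BoundedOrder α] {y b : α} (hy : IsAtom y)
    (hb : IsCoatomOfErase y b) (hb0 : b ≠ ⊥) : IsCoatom b := by
  refine ⟨hb.2.1, fun c hbc => hb.2.2 c ?_ hbc⟩
  rintro rfl
  exact hb0 (hy.lt_iff.mp hbc)

theorem IsCoatomOfErase.le_of_forall_isCoatom [BoundedOrder α] {x y b : α} (hy : IsAtom y)
    (hb : IsCoatomOfErase y b) (hx : ⊥ < x) (hx' : x < ⊤) (hyx : y ≠ x)
    (hcomp : ∀ b : α, IsCoatom b → x ≤ b ∨ b ≤ x) : x ≤ b := by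
  by_cases hb0 : b = ⊥
  · exact absurd (hb.2.2 x hyx.symm (hb0 ▸ hx)) hx'.ne
  have hcoatom := hb.isCoatom hy hb0
  rcases hcomp b hcoatom with hxb | hbx
  · exact hxb
  · rcases hcoatom.le_iff.mp hbx with hxt | hxb
    · exact absurd hxt hx'.ne
    · exact hxb.le

theorem exists_le_isCoatomOfErase [OrderTop α] [Finite α] {y z : α} (hzy : z ≠ y)
    (hzt : z ≠ ⊤) : ∃ b, z ≤ b ∧ IsCoatomOfErase y b := by
  obtain ⟨b, hzb, hmax⟩ := Finite.exists_le_maximal (p := fun b : α => b ≠ y ∧ b ≠ ⊤) ⟨hzy, hzt⟩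
  refine ⟨b, hzb, hmax.prop.1, hmax.prop.2, fun c hcy hbc => ?_⟩
  by_contra hct
  exact hbc.ne (hmax.eq_of_le ⟨hcy, hct⟩ hbc.le)

end

/-- The lattice `L' = L \ {y}` is modelled inside `L`: joins in `L'` are those of `L`,
and the meet of `x` and `z` in `L'` is `⊥` when `x ⊓ z = y`. -/
theorem stmt_5_general {L : Type*} [Lattice L] [Fintype L] [BoundedOrder L]
    (x : L) (hx : ⊥ < x) (hx' : x < ⊤)
    (hcompB : ∀ b : L, IsCoatom b → x ≤ b ∨ b ≤ x)
    (y : L) (hy : IsAtom y) (hyx : y ≠ x) :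
    (∀ b : L, b ≠ y → b ≠ ⊤ → (∀ c : L, c ≠ y → b < c → c = ⊤) → x ≤ b) ∧
    ¬ ∃ z : L, z ≠ y ∧ (if x ⊓ z = y then (⊥ : L) else x ⊓ z) = ⊥ ∧ x ⊔ z = ⊤ := by
  have below_coatoms : ∀ b : L, IsCoatomOfErase y b → x ≤ b := fun b hb =>
    hb.le_of_forall_isCoatom hy hx hx' hyx hcompB
  refine ⟨fun b hby hbt hmax => below_coatoms b ⟨hby, hbt, hmax⟩, ?_⟩
  rintro ⟨z, hzy, hmeet, hjoin⟩
  have hzt : z ≠ ⊤ := by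
    rintro rfl
    simp only [inf_top_eq, hyx.symm, if_false] at hmeet
    exact hx.ne' hmeet
  obtain ⟨b, hzb, hb⟩ := exists_le_isCoatomOfErase hzy hzt
  exact hb.2.1 (top_le_iff.mp (hjoin ▸ sup_le (below_coatoms b hb) hzb))

/-- In L' = L \ {y} (y an atom), meets are given by x ⊓' z = ⊥ if x ⊓ z = y and
x ⊓ z otherwise, while joins are those of L; coatoms of L' are the elements b ≠ y
with b < ⊤ maximal in L'.  If x is comparable to all atoms and coatoms of L, then
x is below every coatom of L' and x has no complement in L'. -/
theorem stmt_5 {L : Type*} [Lattice L] [Fintype L] [BoundedOrder L]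
    (hcard : 2 < Fintype.card L)
    (x : L) (hx : ⊥ < x) (hx' : x < ⊤)
    (hcompA : ∀ a : L, IsAtom a → a ≤ x ∨ x ≤ a)
    (hcompB : ∀ b : L, IsCoatom b → x ≤ b ∨ b ≤ x)
    (y : L) (hy : IsAtom y) (hyx : y ≠ x) :
    (∀ b : L, b ≠ y → b ≠ ⊤ → (∀ c : L, c ≠ y → b < c → c = ⊤) → x ≤ b) ∧
    ¬ ∃ z : L, z ≠ y ∧ (if x ⊓ z = y then (⊥ : L) else x ⊓ z) = ⊥ ∧ x ⊔ z = ⊤ :=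
  stmt_5_general x hx hx' hcompB y hy hyx
end

section
/- Let L be a finite bounded lattice, x with 0 < x < 1, and suppose the set A of atoms of L that are complements of x is nonempty. Let B be the set of coatoms of L that are complements of x. Then: (i) every coatom of L lying above some element of A belongs to B; (ii) every atom of L lying below some element of B belongs to A. -/
open scoped Classical

theorem stmt_8 {L : Type*} [Lattice L] [Fintype L] [BoundedOrder L]
    (x : L) (hx : ⊥ < x) (hx' : x < ⊤)
    (hatoms : ∀ a : L, IsAtom a → a ≤ x ∨ (x ⊓ a = ⊥ ∧ x ⊔ a = ⊤))
    (hcoatoms : ∀ b : L, IsCoatom b → x ≤ b ∨ (x ⊓ b = ⊥ ∧ x ⊔ b = ⊤))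
    (hA : ∃ a : L, IsAtom a ∧ x ⊓ a = ⊥ ∧ x ⊔ a = ⊤) :
    (∀ a : L, IsAtom a → (x ⊓ a = ⊥ ∧ x ⊔ a = ⊤) →
      ∀ b : L, IsCoatom b → a ≤ b → (x ⊓ b = ⊥ ∧ x ⊔ b = ⊤)) ∧
    (∀ b : L, IsCoatom b → (x ⊓ b = ⊥ ∧ x ⊔ b = ⊤) →
      ∀ a : L, IsAtom a → a ≤ b → (x ⊓ a = ⊥ ∧ x ⊔ a = ⊤)) := by
  constructor
  · intro a _ ⟨_, hsup⟩ b hb hab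
    rcases hcoatoms b hb with h | h
    · exact absurd (hsup ▸ sup_le h hab) (by simpa using hb.1)
    · exact h
  · intro b _ ⟨hinf, _⟩ a ha hab
    rcases hatoms a ha with h | h
    · exact absurd (le_antisymm (hinf ▸ le_inf h hab) bot_le) ha.1
    · exact h
end

section
/- A nonevasive finite simplicial complex is collapsible. -/
open scoped Classical

/-- An abstract simplicial complex as a finite family of nonempty finite faces,
closed under taking nonempty subsets, containing all its vertices as singletons. -/
def IsComplex {V : Type*} (K : Finset (Finset V)) : Prop :=
  (∀ σ ∈ K, σ.Nonempty) ∧ (∀ σ ∈ K, ∀ τ ⊆ σ, τ.Nonempty → τ ∈ K)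

/-- The deletion of a vertex from a simplicial complex. -/
noncomputable def dlF {V : Type*} (K : Finset (Finset V)) (v : V) : Finset (Finset V) :=
  K.filter fun σ => v ∉ σ

/-- The link of a vertex in a simplicial complex. -/
noncomputable def lkF {V : Type*} (K : Finset (Finset V)) (v : V) : Finset (Finset V) :=
  K.filter fun σ => v ∉ σ ∧ insert v σ ∈ K

/-- Nonevasiveness: a point is nonevasive, and `K` is nonevasive if some vertex has
nonevasive link and deletion. -/
inductive Nonevasive {V : Type*} : Finset (Finset V) → Prop
  | point (v : V) : Nonevasive {{v}}
  | step (K : Finset (Finset V)) (v : V) (hv : {v} ∈ K)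
      (hlk : Nonevasive (lkF K v)) (hdl : Nonevasive (dlF K v)) : Nonevasive K

/-- Collapsibility: `K` can be reduced to a point by elementary collapses, where an
elementary collapse removes a pair `(σ, τ)` with `σ` a proper face of exactly one face `τ`. -/
inductive Collapsible {V : Type*} : Finset (Finset V) → Prop
  | point (v : V) : Collapsible {{v}}
  | collapse (K : Finset (Finset V)) (σ τ : Finset V) (hσ : σ ∈ K) (hτ : τ ∈ K)
      (hst : σ ⊂ τ) (huniq : ∀ ρ ∈ K, σ ⊂ ρ → ρ = τ)
      (h : Collapsible (K \ {σ, τ})) : Collapsible K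

/-- The order complex of the subposet `S` of `P`: faces are the nonempty chains in `S`. -/
noncomputable def orderComplexOn (P : Type*) [Fintype P] [PartialOrder P] (S : Set P) :
    Finset (Finset P) :=
  Finset.univ.filter fun σ => σ.Nonempty ∧ ↑σ ⊆ S ∧ IsChain (· ≤ ·) (σ : Set P)

private lemma insert_inj_of_not_mem {V : Type*} {v : V} {s t : Finset V}
    (hs : v ∉ s) (ht : v ∉ t) (h : insert v s = insert v t) : s = t := by
  have := congrArg (fun u => Finset.erase u v) h
  simpa [Finset.erase_insert hs, Finset.erase_insert ht] using this

private lemma key {V : Type*} {L : Finset (Finset V)} (hL : Collapsible L) :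
    ∀ (A : Finset (Finset V)) (v : V),
      (∀ σ ∈ L, v ∉ σ) → (∀ σ ∈ L, σ.Nonempty) → (∀ ρ ∈ A, v ∉ ρ) →
      Collapsible A →
      Collapsible (A ∪ {({v} : Finset V)} ∪ L.image (insert v)) := by
  induction hL with
  | point w =>
      intro A v hvL hne hA hcA
      have hvw : v ≠ w := by
        have := hvL {w} (by simp)
        simp at this; exact this
      refine Collapsible.collapse _ {v} (insert v {w}) (by simp) (by simp) ?_ ?_ ?_
      · constructor
        · intro x hx; simp at hx; simp [hx]
        · intro hsub
          have := hsub (by simp : w ∈ insert v {w})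
          simp at this; exact hvw this.symm
      · intro ρ hρ hρv
        simp only [Finset.mem_union, Finset.mem_singleton, Finset.image_singleton,
          Finset.mem_image] at hρ
        rcases hρ with (hρ | rfl) | rfl
        · exact absurd (hA ρ hρ) (by simp [hρv.1 (by simp : v ∈ ({v} : Finset V))])
        · exact absurd (Finset.Subset.refl _) hρv.2
        · rfl
      · have : (A ∪ {({v} : Finset V)} ∪ ({{w}} : Finset (Finset V)).image (insert v)) \
            {{v}, insert v {w}} = A := by
          ext ρ
          simp only [Finset.mem_sdiff, Finset.mem_union, Finset.mem_singleton,
            Finset.image_singleton, Finset.mem_insert, Finset.mem_singleton]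
          constructor
          · rintro ⟨(h | rfl) | rfl, hn⟩
            · exact h
            · exact absurd (Or.inl rfl) hn
            · exact absurd (Or.inr rfl) hn
          · intro h
            have hv1 : ρ ≠ {v} := fun e => hA ρ h (by rw [e]; simp)
            have hv2 : ρ ≠ insert v {w} := fun e => hA ρ h (by rw [e]; simp)
            refine ⟨Or.inl (Or.inl h), ?_⟩
            rintro (e | e)
            exacts [hv1 e, hv2 e]
        rw [this]; exact hcA
  | collapse L σ τ hσ hτ hst huniq h ih =>
      intro A v hvL hne hA hcA
      have hvσ : v ∉ σ := hvL σ hσ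
      have hvτ : v ∉ τ := hvL τ hτ
      have hσne : σ.Nonempty := hne σ hσ
      refine Collapsible.collapse _ (insert v σ) (insert v τ)
        (by simp only [Finset.mem_union]; exact Or.inr (Finset.mem_image_of_mem _ hσ))
        (by simp only [Finset.mem_union]; exact Or.inr (Finset.mem_image_of_mem _ hτ))
        ?_ ?_ ?_
      · constructor
        · exact Finset.insert_subset_insert _ hst.1
        · intro hsub
          obtain ⟨x, hxτ, hxσ⟩ := Finset.exists_of_ssubset hst
          have : x ∈ insert v σ := hsub (Finset.mem_insert_of_mem hxτ)
          rcases Finset.mem_insert.1 this with rfl | h'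
          · exact hvτ hxτ
          · exact hxσ h'
      · intro ρ hρ hρs
        simp only [Finset.mem_union, Finset.mem_singleton, Finset.mem_image] at hρ
        rcases hρ with (hρ | rfl) | ⟨μ, hμ, rfl⟩
        · exact absurd (hρs.1 (Finset.mem_insert_self v σ)) (by simpa using hA ρ hρ)
        · obtain ⟨x, hx⟩ := hσne
          have : x ∈ ({v} : Finset V) := hρs.1 (Finset.mem_insert_of_mem hx)
          simp at this
          exact absurd (this ▸ hx) hvσ
        · have hvμ : v ∉ μ := hvL μ hμ
          have hsub : σ ⊆ μ := by
            intro x hx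
            have : x ∈ insert v μ := hρs.1 (Finset.mem_insert_of_mem hx)
            rcases Finset.mem_insert.1 this with rfl | h'
            · exact absurd hx hvσ
            · exact h'
          have hne' : σ ≠ μ := by
            rintro rfl; exact hρs.2 le_rfl
          have := huniq μ hμ ⟨hsub, fun hsub' => hne' (Finset.Subset.antisymm hsub hsub')⟩
          rw [this]
      · have heq : (A ∪ {({v} : Finset V)} ∪ L.image (insert v)) \ {insert v σ, insert v τ}
            = A ∪ {({v} : Finset V)} ∪ (L \ {σ, τ}).image (insert v) := by
          ext ρ
          simp only [Finset.mem_sdiff, Finset.mem_union, Finset.mem_singleton,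
            Finset.mem_image, Finset.mem_insert, Finset.mem_singleton]
          constructor
          · rintro ⟨(h | rfl) | ⟨μ, hμ, rfl⟩, hn⟩
            · exact Or.inl (Or.inl h)
            · exact Or.inl (Or.inr rfl)
            · refine Or.inr ⟨μ, ⟨hμ, ?_⟩, rfl⟩
              rintro (rfl | rfl)
              · exact hn (Or.inl rfl)
              · exact hn (Or.inr rfl)
          · rintro ((h | rfl) | ⟨μ, hμ, rfl⟩)
            · refine ⟨Or.inl (Or.inl h), ?_⟩
              rintro (rfl | rfl) <;> exact hA _ h (Finset.mem_insert_self _ _)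
            · refine ⟨Or.inl (Or.inr rfl), ?_⟩
              rintro (e | e)
              · obtain ⟨x, hx⟩ := hσne
                have : x ∈ ({v} : Finset V) := by
                  rw [e]; exact Finset.mem_insert_of_mem hx
                simp only [Finset.mem_singleton] at this; exact hvσ (this ▸ hx)
              · obtain ⟨x, hx⟩ := hσne
                have : x ∈ ({v} : Finset V) := by
                  rw [e]; exact Finset.mem_insert_of_mem (hst.1 hx)
                simp only [Finset.mem_singleton] at this; exact hvσ (this ▸ hx)
            · refine ⟨Or.inr ⟨μ, hμ.1, rfl⟩, ?_⟩
              rintro (e | e)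
              · exact hμ.2 (Or.inl (insert_inj_of_not_mem (hvL μ hμ.1) hvσ e))
              · exact hμ.2 (Or.inr (insert_inj_of_not_mem (hvL μ hμ.1) hvτ e))
        rw [heq]
        refine ih A v ?_ ?_ hA hcA
        · intro μ hμ; exact hvL μ (Finset.mem_sdiff.1 hμ).1
        · intro μ hμ; exact hne μ (Finset.mem_sdiff.1 hμ).1

private lemma decomp {V : Type*} (K : Finset (Finset V)) (hK : IsComplex K) (v : V)
    (hv : {v} ∈ K) :
    K = dlF K v ∪ {({v} : Finset V)} ∪ (lkF K v).image (insert v) := by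
  ext ρ
  simp only [Finset.mem_union, Finset.mem_singleton, Finset.mem_image, dlF, lkF,
    Finset.mem_filter]
  constructor
  · intro hρ
    by_cases hvρ : v ∈ ρ
    · by_cases hρv : ρ = {v}
      · exact Or.inl (Or.inr hρv)
      · refine Or.inr ⟨ρ.erase v, ⟨?_, ?_, ?_⟩, Finset.insert_erase hvρ⟩
        · refine hK.2 ρ hρ _ (Finset.erase_subset _ _) ?_
          rcases (hK.1 ρ hρ) with ⟨x, hx⟩
          by_cases hxv : x = v
          · subst hxv
            obtain ⟨y, hy, hyx⟩ : ∃ y ∈ ρ, y ≠ x := by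
              by_contra hcon
              push_neg at hcon
              exact hρv (Finset.eq_singleton_iff_unique_mem.2 ⟨hx, hcon⟩)
            exact ⟨y, Finset.mem_erase.2 ⟨hyx, hy⟩⟩
          · exact ⟨x, Finset.mem_erase.2 ⟨hxv, hx⟩⟩
        · simp
        · rwa [Finset.insert_erase hvρ]
    · exact Or.inl (Or.inl ⟨hρ, hvρ⟩)
  · rintro ((⟨h, _⟩ | rfl) | ⟨μ, ⟨_, _, h⟩, rfl⟩)
    · exact h
    · exact hv
    · exact h

/-- A nonevasive finite simplicial complex is collapsible. -/
theorem stmt_9 {V : Type*} (K : Finset (Finset V)) (hK : IsComplex K)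
    (h : Nonevasive K) : Collapsible K := by
  revert hK
  induction h with
  | point v => exact fun _ => Collapsible.point v
  | step K v hv hlk hdl ih1 ih2 =>
      intro hK
      have hKlk : IsComplex (lkF K v) := by
        constructor
        · intro σ hσ
          exact hK.1 σ (Finset.mem_filter.1 hσ).1
        · intro σ hσ τ hτσ hτne
          simp only [lkF, Finset.mem_filter] at hσ ⊢
          obtain ⟨hσK, hvσ, hins⟩ := hσ
          refine ⟨hK.2 σ hσK τ hτσ hτne, fun hvτ => hvσ (hτσ hvτ), ?_⟩
          exact hK.2 _ hins _ (Finset.insert_subset_insert _ hτσ) ⟨v, by simp⟩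
      have hKdl : IsComplex (dlF K v) := by
        constructor
        · intro σ hσ; exact hK.1 σ (Finset.mem_filter.1 hσ).1
        · intro σ hσ τ hτσ hτne
          simp only [dlF, Finset.mem_filter] at hσ ⊢
          exact ⟨hK.2 σ hσ.1 τ hτσ hτne, fun hvτ => hσ.2 (hτσ hvτ)⟩
      rw [decomp K hK v hv]
      refine key (ih1 hKlk) (dlF K v) v ?_ ?_ ?_ (ih2 hKdl)
      · intro σ hσ; exact (Finset.mem_filter.1 hσ).2.1
      · intro σ hσ; exact hK.1 σ (Finset.mem_filter.1 hσ).1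
      · intro ρ hρ; exact (Finset.mem_filter.1 hρ).2
end

section
/- Let L be a finite bounded lattice and x an element with 0 < x < 1. Let P = L \ Co(x), where Co(x) is the set of complements of x in L, and let P̄ = P \ {0,1}. Then the order complex Δ(P̄) is nonevasive (in particular, collapsible and contractible). -/
open scoped Classical

/-!
Write `P̄_{<b}` for the elements of `P̄` strictly below `b`. For `b` with `x ⊓ b ≠ ⊥` and
`x ⊔ b = ⊤` (such as `b = ⊤`) we show, by induction on `b`, that the order complex of `P̄_{<b}` is
nonevasive. The elements `t` of `P̄_{<b}` with `x ⊔ t = ⊤` form an upper set; deleting them from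
the top down, each link is the order complex of `P̄_{<t}`, which is nonevasive by induction since
`x ⊓ t ≠ ⊥`. What remains is stable under the closure operator
`q ↦ q ⊔ (x ⊓ b)`, whose least closed element there is `x ⊓ b`; deleting the non-closed elements
from the top down, every link is a cone, and what is left at the end is a cone with apex `x ⊓ b`.
Nonevasive complexes are collapsible because collapses of a link lift to collapses of the star.
-/

section SimplicialComplex

variable {V : Type*} {K : Finset (Finset V)}

lemma isComplex_lkF (hK : IsComplex K) (v : V) : IsComplex (lkF K v) := by
  refine ⟨fun σ hσ => hK.1 σ (Finset.mem_filter.1 hσ).1, fun σ hσ τ hτσ hτ => ?_⟩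
  obtain ⟨hσK, hvσ, hvσK⟩ := Finset.mem_filter.1 hσ
  exact Finset.mem_filter.2 ⟨hK.2 σ hσK τ hτσ hτ, fun hv => hvσ (hτσ hv),
    hK.2 _ hvσK _ (Finset.insert_subset_insert v hτσ) (Finset.insert_nonempty v τ)⟩

lemma isComplex_dlF (hK : IsComplex K) (v : V) : IsComplex (dlF K v) := by
  refine ⟨fun σ hσ => hK.1 σ (Finset.mem_filter.1 hσ).1, fun σ hσ τ hτσ hτ => ?_⟩
  obtain ⟨hσK, hvσ⟩ := Finset.mem_filter.1 hσ
  exact Finset.mem_filter.2 ⟨hK.2 σ hσK τ hτσ hτ, fun hv => hvσ (hτσ hv)⟩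

lemma isComplex_sdiff_pair (hK : IsComplex K) {σ τ : Finset V} (hστ : σ ⊂ τ)
    (huniq : ∀ ρ ∈ K, σ ⊂ ρ → ρ = τ) : IsComplex (K \ {σ, τ}) := by
  refine ⟨fun ρ hρ => hK.1 ρ (Finset.mem_sdiff.1 hρ).1, fun ρ hρ η hηρ hη => ?_⟩
  simp only [Finset.mem_sdiff, Finset.mem_insert, Finset.mem_singleton, not_or] at hρ ⊢
  obtain ⟨hρK, hρσ, hρτ⟩ := hρ
  refine ⟨hK.2 ρ hρK η hηρ hη, ?_, ?_⟩
  · rintro rfl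
    exact hρτ (huniq ρ hρK (hηρ.ssubset_of_ne (Ne.symm hρσ)))
  · rintro rfl
    exact hρτ (huniq ρ hρK (hστ.trans_le hηρ))

variable {v : V} {σ τ : Finset V}

lemma insert_eq_insert_iff {ρ : Finset V} (hvρ : v ∉ ρ) (hvσ : v ∉ σ) :
    insert v ρ = insert v σ ↔ ρ = σ :=
  Finset.insert_erase_invOn.2.injOn.eq_iff hvρ hvσ

lemma eq_insert_of_insert_ssubset (hK : IsComplex K) (hvσ : v ∉ σ)
    (huniq : ∀ ρ ∈ lkF K v, σ ⊂ ρ → ρ = τ) {ρ : Finset V} (hρ : ρ ∈ K)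
    (hσρ : insert v σ ⊂ ρ) : ρ = insert v τ := by
  have hvρ : v ∈ ρ := hσρ.subset (Finset.mem_insert_self v σ)
  have hσρ' : σ ⊂ ρ.erase v := by
    refine (Finset.ssubset_iff_of_subset fun w hw => ?_).2 ?_
    · exact Finset.mem_erase.2
        ⟨ne_of_mem_of_not_mem hw hvσ, hσρ.subset (Finset.mem_insert_of_mem hw)⟩
    · obtain ⟨w, hwρ, hwσ⟩ := Finset.exists_of_ssubset hσρ
      exact ⟨w, Finset.mem_erase.2 ⟨fun h => hwσ (h ▸ Finset.mem_insert_self v σ), hwρ⟩,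
        fun h => hwσ (Finset.mem_insert_of_mem h)⟩
  have hρ' : ρ.erase v ∈ lkF K v := by
    refine Finset.mem_filter.2 ⟨hK.2 ρ hρ _ (Finset.erase_subset v ρ) ?_,
      Finset.notMem_erase v ρ, by rwa [Finset.insert_erase hvρ]⟩
    exact Finset.empty_ssubset.1 (hσρ'.trans_le' (Finset.empty_subset σ))
  rw [← Finset.insert_erase hvρ, huniq _ hρ' hσρ']

lemma lkF_sdiff_insert_pair (hvσ : v ∉ σ) (hvτ : v ∉ τ) :
    lkF (K \ {insert v σ, insert v τ}) v = lkF K v \ {σ, τ} := by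
  ext ρ
  simp only [lkF, Finset.mem_filter, Finset.mem_sdiff, Finset.mem_insert, Finset.mem_singleton]
  constructor
  · rintro ⟨⟨hρK, -⟩, hvρ, hvρK, hne⟩
    simp only [insert_eq_insert_iff hvρ hvσ, insert_eq_insert_iff hvρ hvτ] at hne
    exact ⟨⟨hρK, hvρ, hvρK⟩, hne⟩
  · rintro ⟨⟨hρK, hvρ, hvρK⟩, hne⟩
    simp only [insert_eq_insert_iff hvρ hvσ, insert_eq_insert_iff hvρ hvτ]
    refine ⟨⟨hρK, ?_⟩, hvρ, hvρK, hne⟩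
    rintro (rfl | rfl) <;> simp at hvρ

lemma dlF_sdiff_insert_pair :
    dlF (K \ {insert v σ, insert v τ}) v = dlF K v := by
  ext ρ
  simp only [dlF, Finset.mem_filter, Finset.mem_sdiff, Finset.mem_insert, Finset.mem_singleton]
  grind

end SimplicialComplex

section Collapse

variable {V : Type*}

/-- Every collapse `(σ, τ)` of the link lifts to the collapse `(v * σ, v * τ)` of `K`; the final
point `{w}` of the link lifts to the collapse `({v}, {v, w})`, after which `v` is gone. -/
theorem collapsible_of_collapsible_lkF {v : V} {M : Finset (Finset V)} (hM : Collapsible M) :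
    ∀ K : Finset (Finset V), IsComplex K → lkF K v = M → Collapsible (dlF K v) →
      Collapsible K := by
  induction hM with
  | point w =>
    intro K hK hlk hdl
    have hw : {w} ∈ lkF K v := hlk ▸ Finset.mem_singleton_self _
    obtain ⟨-, hvw, hvwK⟩ := Finset.mem_filter.1 hw
    have huniq : ∀ ρ ∈ K, {v} ⊂ ρ → ρ = insert v {w} := fun ρ hρ hvρ =>
      eq_insert_of_insert_ssubset (σ := ∅) hK (Finset.notMem_empty v)
        (fun ρ hρ _ => by rwa [hlk, Finset.mem_singleton] at hρ) hρ hvρ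
    have hrest : K \ {{v}, insert v {w}} = dlF K v := by
      ext ρ
      simp only [Finset.mem_sdiff, Finset.mem_insert, Finset.mem_singleton, dlF,
        Finset.mem_filter, not_or]
      refine ⟨fun ⟨hρK, hρv, hρvw⟩ => ⟨hρK, fun hvρ => hρvw (huniq ρ hρK ?_)⟩, ?_⟩
      · exact (Finset.singleton_subset_iff.2 hvρ).ssubset_of_ne (Ne.symm hρv)
      · rintro ⟨hρK, hvρ⟩
        exact ⟨hρK, fun h => hvρ (h ▸ Finset.mem_singleton_self v),
          fun h => hvρ (h ▸ Finset.mem_insert_self v {w})⟩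
    refine .collapse K {v} (insert v {w})
      (hK.2 _ hvwK _ (by simp) (Finset.singleton_nonempty v)) hvwK
      (by rw [Finset.pair_comm]; exact Finset.ssubset_insert (by simpa [eq_comm] using hvw))
      huniq (hrest ▸ hdl)
  | collapse M σ τ hσ hτ hστ huniq _ ih =>
    intro K hK hlk hdl
    rw [← hlk] at hσ hτ huniq
    obtain ⟨-, hvσ, hvσK⟩ := Finset.mem_filter.1 hσ
    obtain ⟨-, hvτ, hvτK⟩ := Finset.mem_filter.1 hτ
    have hvστ : insert v σ ⊂ insert v τ :=
      (Finset.insert_subset_insert v hστ.subset).ssubset_of_ne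
        fun h => hστ.ne ((insert_eq_insert_iff hvσ hvτ).1 h)
    have huniq' : ∀ ρ ∈ K, insert v σ ⊂ ρ → ρ = insert v τ := fun ρ hρ =>
      eq_insert_of_insert_ssubset hK hvσ huniq hρ
    refine .collapse K _ _ hvσK hvτK hvστ huniq' (ih _ (isComplex_sdiff_pair hK hvστ huniq') ?_ ?_)
    · rw [lkF_sdiff_insert_pair hvσ hvτ, hlk]
    · rwa [dlF_sdiff_insert_pair]

theorem Nonevasive.collapsible {K : Finset (Finset V)} (h : Nonevasive K) (hK : IsComplex K) :
    Collapsible K := by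
  induction h with
  | point v => exact .point v
  | step K v _ _ _ ihlk ihdl =>
    exact collapsible_of_collapsible_lkF (ihlk (isComplex_lkF hK v)) K hK rfl
      (ihdl (isComplex_dlF hK v))

end Collapse

section OrderComplex

variable {P : Type*} [Fintype P] [PartialOrder P] {S : Set P}

lemma mem_orderComplexOn {σ : Finset P} :
    σ ∈ orderComplexOn P S ↔ σ.Nonempty ∧ ↑σ ⊆ S ∧ IsChain (· ≤ ·) (σ : Set P) := by
  simp [orderComplexOn]

lemma isComplex_orderComplexOn (S : Set P) : IsComplex (orderComplexOn P S) := by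
  refine ⟨fun σ hσ => (mem_orderComplexOn.1 hσ).1, fun σ hσ τ hτσ hτ => ?_⟩
  obtain ⟨-, hσS, hσ⟩ := mem_orderComplexOn.1 hσ
  exact mem_orderComplexOn.2 ⟨hτ, (Finset.coe_subset.2 hτσ).trans hσS,
    hσ.mono (Finset.coe_subset.2 hτσ)⟩

lemma orderComplexOn_singleton (a : P) : orderComplexOn P {a} = {{a}} := by
  ext σ
  simp only [mem_orderComplexOn, Finset.mem_singleton, Finset.coe_subset_singleton]
  constructor
  · rintro ⟨hσ, hσa, -⟩
    exact hσ.subset_singleton_iff.1 hσa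
  · rintro rfl
    simp

lemma dlF_orderComplexOn (S : Set P) (v : P) :
    dlF (orderComplexOn P S) v = orderComplexOn P (S \ {v}) := by
  ext σ
  simp only [dlF, Finset.mem_filter, mem_orderComplexOn, Set.subset_sdiff,
    Set.disjoint_singleton_right, Finset.mem_coe]
  tauto

lemma lkF_orderComplexOn {v : P} (hv : v ∈ S) :
    lkF (orderComplexOn P S) v = orderComplexOn P {q | q ∈ S ∧ (q < v ∨ v < q)} := by
  ext σ
  simp only [lkF, Finset.mem_filter, mem_orderComplexOn, Finset.coe_insert, Set.insert_subset_iff]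
  constructor
  · rintro ⟨⟨hσ, hσS, hσch⟩, hvσ, -, -, hvσch⟩
    refine ⟨hσ, fun q hq => ⟨hσS hq, ?_⟩, hσch⟩
    have hqv : q ≠ v := ne_of_mem_of_not_mem hq hvσ
    rcases hvσch (Set.mem_insert_of_mem v hq) (Set.mem_insert v _) hqv with h | h
    exacts [Or.inl (h.lt_of_ne hqv), Or.inr (h.lt_of_ne hqv.symm)]
  · rintro ⟨hσ, hσS, hσch⟩
    have hvσ : v ∉ σ := fun h => (hσS h).2.elim (lt_irrefl v) (lt_irrefl v)
    refine ⟨⟨hσ, fun q hq => (hσS hq).1, hσch⟩, hvσ, Finset.insert_nonempty v σ,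
      ⟨hv, fun q hq => (hσS hq).1⟩, hσch.insert fun q hq _ => ?_⟩
    exact (hσS hq).2.symm.imp le_of_lt le_of_lt

lemma Nonevasive.orderComplexOn_of_mem {v : P} (hv : v ∈ S)
    (hlk : Nonevasive (orderComplexOn P {q | q ∈ S ∧ (q < v ∨ v < q)}))
    (hdl : Nonevasive (orderComplexOn P (S \ {v}))) : Nonevasive (orderComplexOn P S) := by
  refine .step _ v (mem_orderComplexOn.2 ⟨Finset.singleton_nonempty v, by simpa using hv, ?_⟩)
    (lkF_orderComplexOn hv ▸ hlk) (dlF_orderComplexOn S v ▸ hdl)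
  simp

end OrderComplex

section Nonevasive

variable {P : Type*} [Fintype P] [PartialOrder P]

theorem nonevasive_orderComplexOn_of_comparable {a : P} :
    ∀ {S : Set P}, a ∈ S → (∀ q ∈ S, a ≤ q ∨ q ≤ a) → Nonevasive (orderComplexOn P S) := by
  intro S
  induction S using WellFoundedLT.induction with
  | _ S ih =>
  intro ha hcomp
  by_cases hS : S = {a}
  · rw [hS, orderComplexOn_singleton]
    exact .point a
  obtain ⟨u, hu, hua⟩ : ∃ u ∈ S, u ≠ a := by
    by_contra! h
    exact hS (Set.eq_singleton_iff_unique_mem.2 ⟨ha, h⟩)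
  refine Nonevasive.orderComplexOn_of_mem hu (ih _ ?_ ⟨ha, ?_⟩ fun q hq => hcomp q hq.1)
    (ih _ (Set.sdiff_singleton_ssubset.2 hu) ⟨ha, hua.symm⟩ fun q hq => hcomp q hq.1)
  · exact (Set.ssubset_iff_of_subset (Set.sep_subset _ _)).2
      ⟨u, hu, fun h => h.2.elim (lt_irrefl u) (lt_irrefl u)⟩
  · exact (hcomp u hu).imp (lt_of_le_of_ne · hua.symm) (lt_of_le_of_ne · hua)

theorem nonevasive_orderComplexOn_of_isUpperSet {T : Set P} (hT : IsUpperSet T) :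
    ∀ {S : Set P}, Nonevasive (orderComplexOn P (S \ T)) →
      (∀ t ∈ S ∩ T, Nonevasive (orderComplexOn P {q | q ∈ S ∧ q < t})) →
      Nonevasive (orderComplexOn P S) := by
  intro S
  induction S using WellFoundedLT.induction with
  | _ S ih =>
  intro hST hlk
  rcases (S ∩ T).eq_empty_or_nonempty with hST' | hST'
  · rwa [sdiff_eq_left.2 (Set.disjoint_iff_inter_eq_empty.2 hST')] at hST
  obtain ⟨t, ht⟩ := (S ∩ T).toFinite.exists_maximal hST'
  have htop : ∀ q ∈ S, ¬ t < q := fun q hq htq =>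
    ht.not_gt ⟨hq, hT htq.le ht.prop.2⟩ htq
  refine Nonevasive.orderComplexOn_of_mem ht.prop.1 ?_
    (ih _ (Set.sdiff_singleton_ssubset.2 ht.prop.1) ?_ fun t' ht' => ?_)
  · have hlt : {q | q ∈ S ∧ (q < t ∨ t < q)} = {q | q ∈ S ∧ q < t} :=
      Set.ext fun q => and_congr_right fun hq => or_iff_left (htop q hq)
    exact hlt ▸ hlk t ht.prop
  · rwa [Set.sdiff_sdiff_comm, Set.sdiff_singleton_eq_self fun h => h.2 ht.prop.2]
  · have hlt : {q | q ∈ S \ {t} ∧ q < t'} = {q | q ∈ S ∧ q < t'} := by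
      refine Set.ext fun q => ⟨fun hq => ⟨hq.1.1, hq.2⟩, fun hq => ⟨⟨hq.1, ?_⟩, hq.2⟩⟩
      rintro rfl
      exact htop t' ht'.1.1 hq.2
    exact hlt ▸ hlk t' ⟨ht'.1.1, ht'.2⟩

/-- Removing a maximal non-closed `p` first, its link is a cone with apex `c p`: elements below `p`
lie below `c p`, and elements above `p` are closed, hence lie above `c p`. -/
theorem nonevasive_orderComplexOn_of_closureOperator (c : ClosureOperator P) {m : P} :
    ∀ {S : Set P}, Set.MapsTo c S S → IsLeast {q | q ∈ S ∧ c.IsClosed q} m →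
      Nonevasive (orderComplexOn P S) := by
  intro S
  induction S using WellFoundedLT.induction with
  | _ S ih =>
  intro hS hm
  rcases {q | q ∈ S ∧ ¬ c.IsClosed q}.eq_empty_or_nonempty with hcl | hcl
  · refine nonevasive_orderComplexOn_of_comparable hm.1.1 fun q hq => Or.inl (hm.2 ⟨hq, ?_⟩)
    by_contra h
    exact hcl.subset ⟨hq, h⟩
  obtain ⟨p, hp⟩ := {q | q ∈ S ∧ ¬ c.IsClosed q}.toFinite.exists_maximal hcl
  have hpc : p < c p := (c.le_closure p).lt_of_ne fun h => hp.prop.2 (c.isClosed_iff.2 h.symm)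
  have hclosed : ∀ q ∈ S, p < q → c q = q := fun q hq hpq => by
    by_contra h
    exact hp.not_gt ⟨hq, fun h' => h (c.isClosed_iff.1 h')⟩ hpq
  refine Nonevasive.orderComplexOn_of_mem hp.prop.1
    (nonevasive_orderComplexOn_of_comparable ⟨hS hp.prop.1, Or.inr hpc⟩ fun q hq => ?_)
    (ih _ (Set.sdiff_singleton_ssubset.2 hp.prop.1) (fun q hq => ⟨hS hq.1, fun h => ?_⟩) ?_)
  · rcases hq.2 with hqp | hpq
    · exact Or.inr (hqp.le.trans hpc.le)
    · exact Or.inl ((c.monotone hpq.le).trans_eq (hclosed q hq.1 hpq))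
  · exact hp.prop.2 (h ▸ c.isClosed_closure q)
  · exact ⟨⟨⟨hm.1.1, fun h => hp.prop.2 (h ▸ hm.1.2)⟩, hm.1.2⟩, fun q hq => hm.2 ⟨hq.1.1, hq.2⟩⟩

end Nonevasive

def ClosureOperator.supRight {α : Type*} [SemilatticeSup α] (m : α) : ClosureOperator α :=
  .mk' (· ⊔ m) (fun _ _ h => sup_le_sup_right h m) (fun _ => le_sup_left)
    fun q => by simp only [sup_assoc, sup_idem, le_refl]

@[simp]
lemma ClosureOperator.supRight_apply {α : Type*} [SemilatticeSup α] (m q : α) :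
    ClosureOperator.supRight m q = q ⊔ m :=
  rfl

section Lattice

variable {L : Type*} [Lattice L] [BoundedOrder L] {x : L}

/-- The poset `P̄ = (L \ Co(x)) \ {0, 1}`. -/
def properNoncomplements (x : L) : Set L := {p | ¬ (x ⊓ p = ⊥ ∧ x ⊔ p = ⊤) ∧ p ≠ ⊥ ∧ p ≠ ⊤}

lemma mem_properNoncomplements_of_sup_ne_top {p : L} (hp : p ≠ ⊥) (hxp : x ⊔ p ≠ ⊤) :
    p ∈ properNoncomplements x :=
  ⟨fun h => hxp h.2, hp, fun h => hxp (h ▸ sup_top_eq x)⟩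

variable [Fintype L]

lemma nonevasive_orderComplexOn_lt_sup_ne_top (hx : x < ⊤) {b : L} (hb : x ⊓ b ≠ ⊥)
    (hb' : x ⊔ b = ⊤) :
    Nonevasive (orderComplexOn L ({p | p ∈ properNoncomplements x ∧ p < b} \ {p | x ⊔ p = ⊤})) := by
  have hmem : ∀ p, p ≠ ⊥ → p ≤ b → x ⊔ p ≠ ⊤ →
      p ∈ {p | p ∈ properNoncomplements x ∧ p < b} \ {p | x ⊔ p = ⊤} := fun p hp hpb hxp =>
    ⟨⟨mem_properNoncomplements_of_sup_ne_top hp hxp,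
      hpb.lt_of_ne fun h => hxp (h ▸ hb')⟩, hxp⟩
  have hsup : ∀ q, x ⊔ (q ⊔ x ⊓ b) = x ⊔ q := fun q => by
    rw [sup_left_comm, sup_inf_self, sup_comm]
  refine nonevasive_orderComplexOn_of_closureOperator (ClosureOperator.supRight (x ⊓ b))
    (m := x ⊓ b) ?_ ⟨⟨?_, (ClosureOperator.supRight _).isClosed_iff.2 (sup_idem _)⟩, ?_⟩
  · rintro q ⟨⟨hq, hqb⟩, hxq⟩
    refine hmem _ (ne_bot_of_le_ne_bot hq.2.1 le_sup_left) (sup_le hqb.le inf_le_right) ?_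
    rwa [ClosureOperator.supRight_apply, hsup]
  · exact hmem _ hb inf_le_right (by rw [sup_inf_self]; exact hx.ne)
  · rintro q ⟨-, hq⟩
    exact le_sup_right.trans_eq ((ClosureOperator.supRight _).isClosed_iff.1 hq)

lemma nonevasive_orderComplexOn_properNoncomplements_lt (hx : x < ⊤) :
    ∀ b : L, x ⊓ b ≠ ⊥ → x ⊔ b = ⊤ →
      Nonevasive (orderComplexOn L {p | p ∈ properNoncomplements x ∧ p < b}) := by
  intro b
  induction b using WellFoundedLT.induction with
  | _ b ih =>
  intro hb hb'
  refine nonevasive_orderComplexOn_of_isUpperSet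
    (fun p q hpq hp => top_unique (hp ▸ sup_le_sup_left hpq x))
    (nonevasive_orderComplexOn_lt_sup_ne_top hx hb hb') fun t ⟨⟨htP, htb⟩, htx⟩ => ?_
  have hlt : {q | q ∈ {p | p ∈ properNoncomplements x ∧ p < b} ∧ q < t} =
      {q | q ∈ properNoncomplements x ∧ q < t} :=
    Set.ext fun q => ⟨fun h => ⟨h.1.1, h.2⟩, fun h => ⟨⟨h.1, h.2.trans htb⟩, h.2⟩⟩
  exact hlt ▸ ih t htb (fun h => htP.1 ⟨h, htx⟩) htx

end Lattice

/-- Main theorem: for a finite bounded lattice L and x with ⊥ < x < ⊤, the order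
complex of (L \ Co(x)) \ {⊥, ⊤} is nonevasive, in particular collapsible. -/
theorem stmt_11 {L : Type*} [Lattice L] [Fintype L] [BoundedOrder L]
    (x : L) (hx : ⊥ < x) (hx' : x < ⊤) :
    Nonevasive (orderComplexOn L
        {p | ¬ (x ⊓ p = ⊥ ∧ x ⊔ p = ⊤) ∧ p ≠ ⊥ ∧ p ≠ ⊤}) ∧
    Collapsible (orderComplexOn L
        {p | ¬ (x ⊓ p = ⊥ ∧ x ⊔ p = ⊤) ∧ p ≠ ⊥ ∧ p ≠ ⊤}) := by
  have hlt : {p | p ∈ properNoncomplements x ∧ p < ⊤} = properNoncomplements x :=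
    Set.ext fun p => and_iff_left_of_imp fun hp => lt_top_iff_ne_top.2 hp.2.2
  have hne : Nonevasive (orderComplexOn L (properNoncomplements x)) :=
    hlt ▸ nonevasive_orderComplexOn_properNoncomplements_lt hx' ⊤ (by simpa using hx.ne')
      (sup_top_eq x)
  exact ⟨hne, hne.collapsible (isComplex_orderComplexOn _)⟩
end

section
/- Let L be a finite bounded lattice and x ∈ L with 0 < x < 1 having no complement. Then the Möbius function μ_L(0,1) = 0. -/
open scoped Classical
open Finset

-- Weisner-type lemma (one-sided): for all y ≥ x, sum of μ ⊥ b over b with b ⊔ x = y is 0.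
lemma weisner_aux {L : Type*} [Lattice L] [Fintype L] [BoundedOrder L]
    (μ : L → L → ℤ)
    (hsum : ∀ a b : L, a < b →
      (∑ c ∈ Finset.univ.filter fun c => a ≤ c ∧ c ≤ b, μ a c) = 0)
    (x : L) (hx : ⊥ < x) :
    ∀ y : L, x ≤ y → (∑ b ∈ Finset.univ.filter fun b => b ⊔ x = y, μ ⊥ b) = 0 := by
  intro y
  induction y using WellFoundedLT.induction with
  | _ y IH =>
    intro hxy
    have hby : (⊥ : L) < y := lt_of_lt_of_le hx hxy
    have hA : (∑ z ∈ Finset.univ.filter fun z => x ≤ z ∧ z ≤ y,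
        ∑ b ∈ Finset.univ.filter fun b => b ⊔ x = z, μ ⊥ b) = 0 := by
      have hmaps : ∀ b ∈ Finset.univ.filter fun b : L => b ≤ y,
          (b ⊔ x) ∈ Finset.univ.filter fun z => x ≤ z ∧ z ≤ y := by
        intro b hb
        simp only [mem_filter, mem_univ, true_and] at hb ⊢
        exact ⟨le_sup_right, sup_le hb hxy⟩
      have hfib := Finset.sum_fiberwise_of_maps_to hmaps (μ ⊥)
      have hinner : ∀ z ∈ Finset.univ.filter fun z : L => x ≤ z ∧ z ≤ y,
          (∑ b ∈ (Finset.univ.filter fun b : L => b ≤ y).filter fun b => b ⊔ x = z, μ ⊥ b)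
          = ∑ b ∈ Finset.univ.filter fun b => b ⊔ x = z, μ ⊥ b := by
        intro z hz
        simp only [mem_filter, mem_univ, true_and] at hz
        congr 1
        ext b
        simp only [mem_filter, mem_univ, true_and]
        constructor
        · rintro ⟨-, h⟩; exact h
        · intro h
          exact ⟨le_trans (le_trans le_sup_left h.le) hz.2, h⟩
      rw [← Finset.sum_congr rfl hinner, hfib]
      have := hsum ⊥ y hby
      rw [← this]
      apply Finset.sum_congr _ (fun _ _ => rfl)
      ext c
      simp [bot_le]
    have hone : (∑ z ∈ Finset.univ.filter fun z => x ≤ z ∧ z ≤ y,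
        ∑ b ∈ Finset.univ.filter fun b => b ⊔ x = z, μ ⊥ b)
        = ∑ b ∈ Finset.univ.filter fun b => b ⊔ x = y, μ ⊥ b := by
      apply Finset.sum_eq_single_of_mem
      · simp only [mem_filter, mem_univ, true_and]
        exact ⟨hxy, le_refl y⟩
      · intro z hz hne
        simp only [mem_filter, mem_univ, true_and] at hz
        exact IH z (lt_of_le_of_ne hz.2 hne) hz.1
    rw [← hone, hA]

lemma key_aux : ∀ (n : ℕ) (L : Type u) [Lattice L] [Fintype L] [BoundedOrder L],
    Fintype.card L ≤ n →
    ∀ (x : L), ⊥ < x → x < ⊤ → (¬ ∃ z : L, x ⊓ z = ⊥ ∧ x ⊔ z = ⊤) →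
    ∀ (μ : L → L → ℤ), (∀ a, μ a a = 1) →
    (∀ a b : L, a < b →
      (∑ c ∈ Finset.univ.filter fun c => a ≤ c ∧ c ≤ b, μ a c) = 0) →
    μ ⊥ ⊤ = 0 := by
  intro n
  induction n with
  | zero =>
    intro L _ _ _ hcard x hx _ _ _ _ _
    have : Fintype.card L = 0 := Nat.le_zero.mp hcard
    have := Fintype.card_eq_zero_iff.mp this
    exact (this.false x).elim
  | succ n IH =>
    intro L _ _ _ hcard x hx hx' hnc μ hrefl hsum
    have hW := weisner_aux μ hsum x hx ⊤ le_top
    -- every term with b ≠ ⊤ vanishes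
    have hzero : ∀ b : L, b ⊔ x = ⊤ → b ≠ ⊤ → μ ⊥ b = 0 := by
      intro b hbx hbne
      -- b ⊓ x ≠ ⊥ (else b is a complement of x)
      have hinfne : x ⊓ b ≠ ⊥ := by
        intro h
        exact hnc ⟨b, h, by rw [sup_comm]; exact hbx⟩
      have hxb_lt : x ⊓ b < b := by
        refine lt_of_le_of_ne inf_le_right ?_
        intro h
        have hbx' : b ≤ x := h ▸ inf_le_left
        have : (⊤ : L) = x := by rw [← hbx, sup_eq_right.mpr hbx']
        exact hx'.ne' this
      set L' := ↥(Set.Iic b) with hL'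
      have hcard' : Fintype.card L' ≤ n := by
        have hlt : Fintype.card L' < Fintype.card L := by
          apply Fintype.card_subtype_lt (x := ⊤)
          simpa [Set.mem_Iic, top_le_iff] using hbne
        omega
      set x' : L' := ⟨x ⊓ b, inf_le_right⟩ with hx'def
      have hb1 : (⊥ : L') < x' := by
        rw [← Subtype.coe_lt_coe, Set.Iic.coe_bot]
        exact lt_of_le_of_ne bot_le (Ne.symm hinfne)
      have hb2 : x' < ⊤ := by
        rw [← Subtype.coe_lt_coe, Set.Iic.coe_top]
        exact hxb_lt
      have hnc' : ¬ ∃ z : L', x' ⊓ z = ⊥ ∧ x' ⊔ z = ⊤ := by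
        rintro ⟨⟨z, hz⟩, h1, h2⟩
        apply hnc
        have hzb : z ≤ b := Set.mem_Iic.mp hz
        have e1 : (x ⊓ b) ⊓ z = ⊥ := by
          have := congrArg Subtype.val h1
          rwa [Set.Iic.coe_inf, Set.Iic.coe_bot] at this
        have e2 : (x ⊓ b) ⊔ z = b := by
          have := congrArg Subtype.val h2
          rwa [Set.Iic.coe_sup, Set.Iic.coe_top] at this
        refine ⟨z, ?_, ?_⟩
        · calc x ⊓ z = x ⊓ (b ⊓ z) := by rw [inf_eq_right.mpr hzb]
            _ = (x ⊓ b) ⊓ z := by rw [inf_assoc]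
            _ = ⊥ := e1
        · have hble : b ≤ x ⊔ z := by
            rw [← e2]
            exact sup_le (le_trans inf_le_left le_sup_left) le_sup_right
          have : (⊤ : L) ≤ x ⊔ z := by
            rw [← hbx]
            exact sup_le (le_trans hble (le_refl _)) le_sup_left
          exact le_antisymm le_top this
      set μ' : L' → L' → ℤ := fun a c => μ a.1 c.1 with hμ'
      have hrefl' : ∀ a : L', μ' a a = 1 := fun a => hrefl a.1
      have hsum' : ∀ a c : L', a < c →
          (∑ d ∈ Finset.univ.filter fun d => a ≤ d ∧ d ≤ c, μ' a d) = 0 := by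
        intro a c hac
        have hkey : (∑ d ∈ Finset.univ.filter fun d : L' => a ≤ d ∧ d ≤ c, μ' a d)
            = ∑ d ∈ Finset.univ.filter fun d : L => a.1 ≤ d ∧ d ≤ c.1, μ a.1 d := by
          refine Finset.sum_bij' (fun (d : L') _ => d.1)
            (fun (d : L) hd => (⟨d, Set.mem_Iic.mpr
              (le_trans (Finset.mem_filter.mp hd).2.2 c.2)⟩ : L'))
            ?_ ?_ ?_ ?_ ?_
          · intro d hd
            simp only [mem_filter, mem_univ, true_and] at hd ⊢
            exact ⟨hd.1, hd.2⟩
          · intro d hd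
            simp only [mem_filter, mem_univ, true_and, Subtype.mk_le_mk] at hd ⊢
            exact ⟨hd.1, hd.2⟩
          · intro d hd; rfl
          · intro d hd; rfl
          · intro d hd; rfl
        rw [hkey]
        exact hsum a.1 c.1 (Subtype.coe_lt_coe.mpr hac)
      have := IH L' hcard' x' hb1 hb2 hnc' μ' hrefl' hsum'
      have hcoe : μ' ⊥ ⊤ = μ ⊥ b := by
        show μ ((⊥ : L') : L) ((⊤ : L') : L) = μ ⊥ b
        rw [Set.Iic.coe_bot, Set.Iic.coe_top]
      rw [← hcoe]
      exact this
    -- now split off the b = ⊤ term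
    have hsingle : (∑ b ∈ Finset.univ.filter fun b : L => b ⊔ x = ⊤, μ ⊥ b) = μ ⊥ ⊤ := by
      apply Finset.sum_eq_single_of_mem
      · simp only [mem_filter, mem_univ, true_and]
        exact top_sup_eq x
      · intro b hb hbne
        simp only [mem_filter, mem_univ, true_and] at hb
        exact hzero b hb hbne
    rw [← hsingle, hW]

/-- If x (with ⊥ < x < ⊤) has no complement in the finite bounded lattice L, then
the Möbius function μ(⊥, ⊤) of L is zero.  The Möbius function is characterized by
μ(a, a) = 1 and ∑_{a ≤ c ≤ b} μ(a, c) = 0 for a < b. -/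
theorem stmt_13 {L : Type*} [Lattice L] [Fintype L] [BoundedOrder L]
    (x : L) (hx : ⊥ < x) (hx' : x < ⊤)
    (hnc : ¬ ∃ z : L, x ⊓ z = ⊥ ∧ x ⊔ z = ⊤)
    (μ : L → L → ℤ) (hrefl : ∀ a : L, μ a a = 1)
    (hsum : ∀ a b : L, a < b →
      (∑ c ∈ Finset.univ.filter fun c => a ≤ c ∧ c ≤ b, μ a c) = 0) :
    μ ⊥ ⊤ = 0 :=
  key_aux (Fintype.card L) L le_rfl x hx hx' hnc μ hrefl hsum
end

section
/- Let L be a finite bounded lattice, x with 0 < x < 1, and suppose every atom y of L satisfies y ≤ x or y is a complement of x, every coatom b satisfies x ≤ b or b is a complement of x, and there exists an atom that is a complement of x. Let S be the set of all elements of L̄ = L \ {0,1} that are comparable to some atom-complement or coatom-complement of x. Then S ⊆ Co(x), x ∉ S, and L \ S (with the induced order) is a lattice containing 0, 1, and x, with Co_{L\S}(x) = Co_L(x) \ S. -/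
open scoped Classical

/-- The splitting argument: under the comparability/complement hypotheses on atoms and
coatoms and the existence of an atom complement of x, the set S of elements of
L \ {⊥,⊤} comparable to some atom- or coatom-complement of x consists of complements
of x, misses x, ⊥ and ⊤, and L \ S is a lattice (with the induced order) in which
the complements of x are exactly Co_L(x) \ S. -/
theorem stmt_19 {L : Type*} [Lattice L] [Fintype L] [BoundedOrder L]
    (x : L) (hx : ⊥ < x) (hx' : x < ⊤)
    (hatoms : ∀ a : L, IsAtom a → a ≤ x ∨ (x ⊓ a = ⊥ ∧ x ⊔ a = ⊤))
    (hcoatoms : ∀ b : L, IsCoatom b → x ≤ b ∨ (x ⊓ b = ⊥ ∧ x ⊔ b = ⊤))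
    (hA : ∃ a : L, IsAtom a ∧ x ⊓ a = ⊥ ∧ x ⊔ a = ⊤)
    (S : Set L)
    (hS : S = {s | (s ≠ ⊥ ∧ s ≠ ⊤) ∧ ∃ c : L, (IsAtom c ∨ IsCoatom c) ∧
      (x ⊓ c = ⊥ ∧ x ⊔ c = ⊤) ∧ (s ≤ c ∨ c ≤ s)}) :
    (∀ s ∈ S, x ⊓ s = ⊥ ∧ x ⊔ s = ⊤) ∧
    x ∉ S ∧ (⊥ : L) ∉ S ∧ (⊤ : L) ∉ S ∧
    (∀ a b : L, a ∉ S → b ∉ S →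
      (∃ m : L, m ∉ S ∧ m ≤ a ∧ m ≤ b ∧
        ∀ c : L, c ∉ S → c ≤ a → c ≤ b → c ≤ m) ∧
      (∃ j : L, j ∉ S ∧ a ≤ j ∧ b ≤ j ∧
        ∀ c : L, c ∉ S → a ≤ c → b ≤ c → j ≤ c)) ∧
    ({z : L | z ∉ S ∧ (∀ c : L, c ∉ S → c ≤ x → c ≤ z → c = ⊥) ∧
        (∀ c : L, c ∉ S → x ≤ c → z ≤ c → c = ⊤)}
      = {z : L | x ⊓ z = ⊥ ∧ x ⊔ z = ⊤} \ S) := by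
  subst hS
  -- every element of S is a complement of x
  have hcomp : ∀ s : L, ((s ≠ ⊥ ∧ s ≠ ⊤) ∧ ∃ c : L, (IsAtom c ∨ IsCoatom c) ∧
      (x ⊓ c = ⊥ ∧ x ⊔ c = ⊤) ∧ (s ≤ c ∨ c ≤ s)) → x ⊓ s = ⊥ ∧ x ⊔ s = ⊤ := by
    rintro s ⟨⟨hs0, hs1⟩, c, hc, ⟨hm, hj⟩, hcmp⟩
    rcases hc with hc | hc
    · rcases hcmp with h | h
      · rcases (hc.le_iff.1 h) with rfl | rfl
        · exact absurd rfl hs0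
        · exact ⟨hm, hj⟩
      · constructor
        · -- take a coatom above s
          rcases (eq_top_or_exists_le_coatom s).resolve_left hs1 with ⟨b, hb, hsb⟩
          rcases hcoatoms b hb with hxb | ⟨hbm, hbj⟩
          · have hTb : (⊤ : L) ≤ b := by
              calc (⊤ : L) = x ⊔ c := hj.symm
              _ ≤ x ⊔ s := sup_le_sup_left h x
              _ ≤ b := sup_le hxb hsb
            exact absurd (top_le_iff.1 hTb) hb.1
          · exact le_bot_iff.1 (hbm ▸ inf_le_inf_left x hsb)
        · exact top_le_iff.1 (hj ▸ sup_le_sup_left h x)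
    · rcases hcmp with h | h
      · have hm' : x ⊓ s = ⊥ := le_bot_iff.1 (hm ▸ inf_le_inf_left x h)
        refine ⟨hm', ?_⟩
        rcases (eq_bot_or_exists_atom_le s).resolve_left hs0 with ⟨a, ha, has⟩
        rcases hatoms a ha with hax | ⟨ham, haj⟩
        · exact absurd (le_bot_iff.1 (hm' ▸ le_inf hax has)) ha.1
        · exact top_le_iff.1 (haj ▸ sup_le_sup_left has x)
      · rcases (hc.le_iff.1 h) with rfl | rfl
        · exact absurd rfl hs1
        · exact ⟨hm, hj⟩
  -- propagation: comparability with an element of S forces membership in S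
  have hprop : ∀ s t : L,
      ((s ≠ ⊥ ∧ s ≠ ⊤) ∧ ∃ c : L, (IsAtom c ∨ IsCoatom c) ∧
        (x ⊓ c = ⊥ ∧ x ⊔ c = ⊤) ∧ (s ≤ c ∨ c ≤ s)) →
      t ≠ ⊥ → t ≠ ⊤ → (t ≤ s ∨ s ≤ t) →
      ((t ≠ ⊥ ∧ t ≠ ⊤) ∧ ∃ c : L, (IsAtom c ∨ IsCoatom c) ∧
        (x ⊓ c = ⊥ ∧ x ⊔ c = ⊤) ∧ (t ≤ c ∨ c ≤ t)) := by
    intro s t hsS ht0 ht1 hcmp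
    obtain ⟨hsm, hsj⟩ := hcomp s hsS
    rcases hcmp with h | h
    · rcases (eq_bot_or_exists_atom_le t).resolve_left ht0 with ⟨a, ha, hat⟩
      rcases hatoms a ha with hax | hacomp
      · exact absurd (le_bot_iff.1 (hsm ▸ le_inf hax (le_trans hat h))) ha.1
      · exact ⟨⟨ht0, ht1⟩, a, Or.inl ha, hacomp, Or.inr hat⟩
    · rcases (eq_top_or_exists_le_coatom t).resolve_left ht1 with ⟨b, hb, htb⟩
      rcases hcoatoms b hb with hxb | hbcomp
      · have hTb : (⊤ : L) ≤ b := hsj ▸ sup_le hxb (le_trans h htb)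
        exact absurd (top_le_iff.1 hTb) hb.1
      · exact ⟨⟨ht0, ht1⟩, b, Or.inr hb, hbcomp, Or.inl htb⟩
  refine ⟨fun s hs => hcomp s hs, ?_, ?_, ?_, ?_, ?_⟩
  · -- x ∉ S
    intro hxS
    obtain ⟨hxm, _⟩ := hcomp x hxS
    rw [inf_idem] at hxm
    exact absurd hxm hx.ne'
  · rintro ⟨⟨h, _⟩, _⟩; exact h rfl
  · rintro ⟨⟨_, h⟩, _⟩; exact h rfl
  · -- meets and joins stay outside S
    intro a b ha hb
    have hmeet : a ⊓ b ∉ {s : L | (s ≠ ⊥ ∧ s ≠ ⊤) ∧ ∃ c : L,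
        (IsAtom c ∨ IsCoatom c) ∧ (x ⊓ c = ⊥ ∧ x ⊔ c = ⊤) ∧ (s ≤ c ∨ c ≤ s)} := by
      intro h
      rcases eq_or_ne a ⊥ with rfl | ha0
      · exact h.1.1 (by simp)
      rcases eq_or_ne a ⊤ with rfl | ha1
      · exact hb (by simpa using h)
      exact ha (hprop (a ⊓ b) a h ha0 ha1 (Or.inr inf_le_left))
    have hjoin : a ⊔ b ∉ {s : L | (s ≠ ⊥ ∧ s ≠ ⊤) ∧ ∃ c : L,
        (IsAtom c ∨ IsCoatom c) ∧ (x ⊓ c = ⊥ ∧ x ⊔ c = ⊤) ∧ (s ≤ c ∨ c ≤ s)} := by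
      intro h
      rcases eq_or_ne a ⊤ with rfl | ha1
      · exact h.1.2 (by simp)
      rcases eq_or_ne a ⊥ with rfl | ha0
      · exact hb (by simpa using h)
      exact ha (hprop (a ⊔ b) a h ha0 ha1 (Or.inl le_sup_left))
    exact ⟨⟨a ⊓ b, hmeet, inf_le_left, inf_le_right,
        fun c _ hca hcb => le_inf hca hcb⟩,
      ⟨a ⊔ b, hjoin, le_sup_left, le_sup_right,
        fun c _ hac hbc => sup_le hac hbc⟩⟩
  · -- relative complements in L \ S are exactly Co(x) \ S
    ext z
    simp only [Set.mem_setOf_eq, Set.mem_diff]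
    constructor
    · rintro ⟨hzS, h1, h2⟩
      have hmS : x ⊓ z ∉ {s : L | (s ≠ ⊥ ∧ s ≠ ⊤) ∧ ∃ c : L,
          (IsAtom c ∨ IsCoatom c) ∧ (x ⊓ c = ⊥ ∧ x ⊔ c = ⊤) ∧ (s ≤ c ∨ c ≤ s)} := by
        intro h
        obtain ⟨hm, _⟩ := hcomp _ h
        have : x ⊓ (x ⊓ z) = x ⊓ z := by rw [← inf_assoc, inf_idem]
        exact h.1.1 (this ▸ hm)
      have hjS : x ⊔ z ∉ {s : L | (s ≠ ⊥ ∧ s ≠ ⊤) ∧ ∃ c : L,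
          (IsAtom c ∨ IsCoatom c) ∧ (x ⊓ c = ⊥ ∧ x ⊔ c = ⊤) ∧ (s ≤ c ∨ c ≤ s)} := by
        intro h
        obtain ⟨_, hj⟩ := hcomp _ h
        have : x ⊔ (x ⊔ z) = x ⊔ z := by rw [← sup_assoc, sup_idem]
        exact h.1.2 (this ▸ hj)
      exact ⟨⟨h1 _ hmS inf_le_left inf_le_right, h2 _ hjS le_sup_left le_sup_right⟩, hzS⟩
    · rintro ⟨⟨hm, hj⟩, hzS⟩
      exact ⟨hzS, fun c _ hcx hcz => le_bot_iff.1 (hm ▸ le_inf hcx hcz),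
        fun c _ hxc hzc => top_le_iff.1 (hj ▸ sup_le hxc hzc)⟩
end
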